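/- Let D be a square-free integer and A a singular 2×2 matrix over Z[√D]. If A is similar (over Z[√D], via a matrix invertible in M₂(Z[√D])) to a column–row matrix, then A itself is a column–row matrix; i.e., A = [[s,0],[t,0]]·[[u,v],[0,0]] for some s,t,u,v ∈ Z[√D]. -/

import Mathlib

open Polynomial

set_option synthInstance.maxHeartbeats 1000000
set_option maxHeartbeats 1000000

noncomputable abbrev Ksq (D : ℤ) := AdjoinRoot ((X : ℚ[X]) ^ 2 - C (D : ℚ))

noncomputable abbrev Osq (D : ℤ) := integralClosure ℤ (Ksq D)

noncomputable def conjK (D : ℤ) : Ksq D →ₐ[ℚ] Ksq D :=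
  AdjoinRoot.liftAlgHom _ (Algebra.ofId ℚ _) (-(AdjoinRoot.root _)) (by
    show Polynomial.aeval _ _ = 0
    have h0 : (AdjoinRoot.mk ((X : ℚ[X]) ^ 2 - C (D : ℚ)))
        ((X : ℚ[X]) ^ 2 - C (D : ℚ)) = 0 := AdjoinRoot.mk_self
    simp only [map_sub, map_pow, AdjoinRoot.mk_X, AdjoinRoot.mk_C, sub_eq_zero] at h0
    simp [map_sub, map_pow, neg_pow, h0, AdjoinRoot.algebraMap_eq])

noncomputable def conjO (D : ℤ) (z : Osq D) : Osq D :=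
  ⟨conjK D z.1, z.2.map ((conjK D).restrictScalars ℤ)⟩

theorem stmt_9 (D : ℤ) (hD : Squarefree D)
    (A : Matrix (Fin 2) (Fin 2) (Osq D)) (hsing : A.det = 0)
    (P : Matrix (Fin 2) (Fin 2) (Osq D)) (hP : IsUnit P)
    (a b c d : Osq D)
    (hsim : A = P * (!![a, 0; b, 0] * !![c, d; 0, 0]) * P⁻¹) :
    ∃ s t u v : Osq D, A = !![s, 0; t, 0] * !![u, v; 0, 0] := by
  set Q := P⁻¹
  refine ⟨(P * !![a, 0; b, 0]) 0 0, (P * !![a, 0; b, 0]) 1 0,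
    (!![c, d; 0, 0] * Q) 0 0, (!![c, d; 0, 0] * Q) 0 1, ?_⟩
  have h1 : P * !![a, 0; b, 0] =
      !![(P * !![a, 0; b, 0]) 0 0, 0; (P * !![a, 0; b, 0]) 1 0, 0] := by
    ext i j
    fin_cases i <;> fin_cases j <;>
      simp only [Matrix.mul_apply, Matrix.of_apply, Fin.sum_univ_two, Matrix.cons_val', Matrix.cons_val_zero,
        Matrix.cons_val_one, Matrix.head_cons, Matrix.empty_val', Matrix.cons_val_fin_one,
        Matrix.head_fin_const, Fin.mk_zero, Fin.mk_one, Fin.isValue, mul_zero, add_zero, zero_add, mul_one]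
  have h2 : !![c, d; 0, 0] * Q =
      !![(!![c, d; 0, 0] * Q) 0 0, (!![c, d; 0, 0] * Q) 0 1; 0, 0] := by
    ext i j
    fin_cases i <;> fin_cases j <;>
      simp only [Matrix.mul_apply, Matrix.of_apply, Fin.sum_univ_two, Matrix.cons_val', Matrix.cons_val_zero,
        Matrix.cons_val_one, Matrix.head_cons, Matrix.empty_val', Matrix.cons_val_fin_one,
        Matrix.head_fin_const, Fin.mk_zero, Fin.mk_one, Fin.isValue, mul_zero, zero_mul, add_zero, zero_add, mul_one]
  rw [hsim, ← mul_assoc, mul_assoc (P * !![a, 0; b, 0]), ← h1, ← h2]
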